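/- Let σ ∈ V_ℂ satisfy b(σ,σ) = 0 and b(σ,σ̄) > 0, let λ ∈ ℂ be nonzero, and let B, ω ∈ V with b(ω,ω) > 0. Set φ = (0, σ, 0) and φ' = λ·e^{B+iω} in W_ℂ. Then φ' is a hyperKähler structure for φ, i.e., the planes P_φ and P_{φ'} are pointwise orthogonal with respect to the Mukai pairing and ⟨φ, φ̄⟩ = ⟨φ', φ̄'⟩, if and only if b(σ,B) = 0, b(σ,ω) = 0, and 2·|λ|²·b(ω,ω) = b(σ, σ̄). -/

import Mathlib

noncomputable section

/-- ℂ-bilinear extension of `b` to `V_ℂ = V × V` (a pair `(x, y)` represents `x + i y`). -/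
def bC {V : Type*} [AddCommGroup V] [Module ℝ V]
    (b : V →ₗ[ℝ] V →ₗ[ℝ] ℝ) (φ ψ : V × V) : ℂ :=
  ⟨b φ.1 ψ.1 - b φ.2 ψ.2, b φ.1 ψ.2 + b φ.2 ψ.1⟩

/-- Complex conjugation on `V_ℂ = V × V`. -/
def conjV {V : Type*} [AddCommGroup V] [Module ℝ V] (φ : V × V) : V × V :=
  (φ.1, -φ.2)

/-- The ℂ-bilinear Mukai pairing on `W_ℂ = ℂ × V_ℂ × ℂ`. -/
def mukaiC {V : Type*} [AddCommGroup V] [Module ℝ V]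
    (b : V →ₗ[ℝ] V →ₗ[ℝ] ℝ) (w w' : ℂ × (V × V) × ℂ) : ℂ :=
  bC b w.2.1 w'.2.1 - w.1 * w'.2.2 - w.2.2 * w'.1

/-- Complex conjugation on `W_ℂ = ℂ × V_ℂ × ℂ`. -/
def conjW {V : Type*} [AddCommGroup V] [Module ℝ V]
    (w : ℂ × (V × V) × ℂ) : ℂ × (V × V) × ℂ :=
  ((starRingEnd ℂ) w.1, conjV w.2.1, (starRingEnd ℂ) w.2.2)

/-- Scalar multiplication by `λ ∈ ℂ` on `V_ℂ = V × V`. -/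
def csmul {V : Type*} [AddCommGroup V] [Module ℝ V] (lam : ℂ) (x : V × V) : V × V :=
  (lam.re • x.1 - lam.im • x.2, lam.re • x.2 + lam.im • x.1)

/-- Scalar multiplication by `λ ∈ ℂ` on `W_ℂ = ℂ × V_ℂ × ℂ`. -/
def smulW {V : Type*} [AddCommGroup V] [Module ℝ V]
    (lam : ℂ) (w : ℂ × (V × V) × ℂ) : ℂ × (V × V) × ℂ :=
  (lam * w.1, csmul lam w.2.1, lam * w.2.2)

/-- `e^{B+iω} = (1, B+iω, ½(b(B,B)−b(ω,ω)) + i·b(B,ω)) ∈ W_ℂ` for `B, ω ∈ V`. -/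
def expB {V : Type*} [AddCommGroup V] [Module ℝ V]
    (b : V →ₗ[ℝ] V →ₗ[ℝ] ℝ) (B ω : V) : ℂ × (V × V) × ℂ :=
  (1, (B, ω), ⟨(b B B - b ω ω) / 2, b B ω⟩)

/-- The Mukai pairing on `W = ℝ × V × ℝ`. -/
def mukai {V : Type*} [AddCommGroup V] [Module ℝ V]
    (b : V →ₗ[ℝ] V →ₗ[ℝ] ℝ) (w w' : ℝ × V × ℝ) : ℝ :=
  b w.2.1 w'.2.1 - w.1 * w'.2.2 - w.2.2 * w'.1

/-- The real part of `ψ ∈ W_ℂ`, an element of `W = ℝ × V × ℝ`. -/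
def ReW {V : Type*} [AddCommGroup V] [Module ℝ V]
    (w : ℂ × (V × V) × ℂ) : ℝ × V × ℝ :=
  (w.1.re, w.2.1.1, w.2.2.re)

/-- The imaginary part of `ψ ∈ W_ℂ`, an element of `W = ℝ × V × ℝ`. -/
def ImW {V : Type*} [AddCommGroup V] [Module ℝ V]
    (w : ℂ × (V × V) × ℂ) : ℝ × V × ℝ :=
  (w.1.im, w.2.1.2, w.2.2.im)

/-- The real plane `P_ψ = ℝ·Re ψ + ℝ·Im ψ ⊆ W` of `ψ ∈ W_ℂ`. -/
def PW {V : Type*} [AddCommGroup V] [Module ℝ V]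
    (w : ℂ × (V × V) × ℂ) : Submodule ℝ (ℝ × V × ℝ) :=
  Submodule.span ℝ {ReW w, ImW w}

/-- `P_ψ` and `P_{ψ'}` are pointwise orthogonal for the Mukai pairing. -/
def PointwiseOrth {V : Type*} [AddCommGroup V] [Module ℝ V]
    (b : V →ₗ[ℝ] V →ₗ[ℝ] ℝ) (w w' : ℂ × (V × V) × ℂ) : Prop :=
  ∀ u ∈ PW w, ∀ v ∈ PW w', mukai b u v = 0

/-!
For `ψ, ψ' ∈ W_ℂ` the real and imaginary parts of `⟨ψ, ψ'⟩` and `⟨ψ, ψ̄'⟩` are sums and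
differences of the four Mukai pairings between `Re ψ, Im ψ` and `Re ψ', Im ψ'`, so `P_ψ` and
`P_ψ'` are pointwise orthogonal iff `⟨ψ, ψ'⟩ = ⟨ψ, ψ̄'⟩ = 0`. For `φ = (0, σ, 0)` and
`φ' = λ e^{B+iω}` these two numbers are `λ (b(σ,B) + i b(σ,ω))` and `λ̄ (b(σ,B) - i b(σ,ω))`,
which vanish iff `b(σ,B) = b(σ,ω) = 0` as `λ ≠ 0`, while `⟨φ', φ̄'⟩ = |λ|² ⟨e^{B+iω}, e^{B-iω}⟩`
and the latter is `2 b(ω,ω)`.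
-/

open Complex

theorem LinearMap.apply_eq_zero_of_mem_span₂ {R M N P : Type*} [CommSemiring R]
    [AddCommMonoid M] [Module R M] [AddCommMonoid N] [Module R N] [AddCommMonoid P] [Module R P]
    (f : M →ₗ[R] N →ₗ[R] P) {s : Set M} {t : Set N} (h : ∀ x ∈ s, ∀ y ∈ t, f x y = 0)
    {x : M} {y : N} (hx : x ∈ Submodule.span R s) (hy : y ∈ Submodule.span R t) : f x y = 0 := by
  induction hx, hy using Submodule.span_induction₂ with
  | mem_mem x y hx hy => exact h x hx y hy
  | _ => simp_all

theorem Complex.add_I_mul_eq_zero_and_sub_I_mul_eq_zero_iff {p q : ℂ} :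
    p + I * q = 0 ∧ p - I * q = 0 ↔ p = 0 ∧ q = 0 := by
  constructor
  · rintro ⟨hadd, hsub⟩
    refine ⟨by linear_combination (hadd + hsub) / 2, ?_⟩
    linear_combination (-I) * (hadd - hsub) / 2 + q * I_sq
  · rintro ⟨rfl, rfl⟩
    simp

section Mukai

variable {V : Type*} [AddCommGroup V] [Module ℝ V] (b : V →ₗ[ℝ] V →ₗ[ℝ] ℝ)

def mukaiBilin : (ℝ × V × ℝ) →ₗ[ℝ] (ℝ × V × ℝ) →ₗ[ℝ] ℝ :=
  LinearMap.mk₂ ℝ (mukai b)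
    (fun _ _ _ => by
      simp only [mukai, Prod.fst_add, Prod.snd_add, map_add, LinearMap.add_apply]; ring)
    (fun _ _ _ => by
      simp only [mukai, Prod.smul_fst, Prod.smul_snd, map_smul, LinearMap.smul_apply, smul_eq_mul]
      ring)
    (fun _ _ _ => by simp only [mukai, Prod.fst_add, Prod.snd_add, map_add]; ring)
    (fun _ _ _ => by simp only [mukai, Prod.smul_fst, Prod.smul_snd, map_smul, smul_eq_mul]; ring)

theorem pointwiseOrth_iff_ReW_ImW (w w' : ℂ × (V × V) × ℂ) :
    PointwiseOrth b w w' ↔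
      mukai b (ReW w) (ReW w') = 0 ∧ mukai b (ReW w) (ImW w') = 0 ∧
        mukai b (ImW w) (ReW w') = 0 ∧ mukai b (ImW w) (ImW w') = 0 := by
  have mem_PW (w : ℂ × (V × V) × ℂ) : ReW w ∈ PW w ∧ ImW w ∈ PW w :=
    ⟨Submodule.subset_span (by simp), Submodule.subset_span (by simp)⟩
  refine ⟨fun h => ⟨h _ (mem_PW w).1 _ (mem_PW w').1, h _ (mem_PW w).1 _ (mem_PW w').2,
    h _ (mem_PW w).2 _ (mem_PW w').1, h _ (mem_PW w).2 _ (mem_PW w').2⟩, ?_⟩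
  rintro ⟨h₁, h₂, h₃, h₄⟩ u hu v hv
  refine (mukaiBilin b).apply_eq_zero_of_mem_span₂ ?_ hu hv
  rintro _ (rfl | rfl) _ (rfl | rfl) <;> assumption

theorem mukaiC_eq (w w' : ℂ × (V × V) × ℂ) :
    mukaiC b w w' =
      ⟨mukai b (ReW w) (ReW w') - mukai b (ImW w) (ImW w'),
        mukai b (ReW w) (ImW w') + mukai b (ImW w) (ReW w')⟩ := by
  apply Complex.ext <;> simp [mukaiC, mukai, bC, ReW, ImW] <;> ring

theorem ReW_conjW (w : ℂ × (V × V) × ℂ) : ReW (conjW w) = ReW w := rfl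

theorem ImW_conjW (w : ℂ × (V × V) × ℂ) : ImW (conjW w) = -ImW w := by
  simp [ImW, conjW, conjV]

theorem pointwiseOrth_iff_mukaiC (w w' : ℂ × (V × V) × ℂ) :
    PointwiseOrth b w w' ↔ mukaiC b w w' = 0 ∧ mukaiC b w (conjW w') = 0 := by
  have neg_right (u v) : mukai b u (-v) = -mukai b u v := (mukaiBilin b u).map_neg v
  simp only [pointwiseOrth_iff_ReW_ImW, mukaiC_eq, ReW_conjW, ImW_conjW, neg_right,
    Complex.ext_iff, Complex.zero_re, Complex.zero_im]
  constructor
  · rintro ⟨h₁, h₂, h₃, h₄⟩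
    simp [h₁, h₂, h₃, h₄]
  · rintro ⟨⟨h₁, h₂⟩, h₃, h₄⟩
    refine ⟨?_, ?_, ?_, ?_⟩ <;> linarith

theorem mukaiC_middle_left (x : V × V) (w : ℂ × (V × V) × ℂ) :
    mukaiC b ((0 : ℂ), x, (0 : ℂ)) w = bC b x w.2.1 := by
  simp [mukaiC]

theorem bC_csmul_left (lam : ℂ) (x y : V × V) : bC b (csmul lam x) y = lam * bC b x y := by
  apply Complex.ext <;> simp [bC, csmul] <;> ring

theorem bC_csmul_right (lam : ℂ) (x y : V × V) : bC b x (csmul lam y) = lam * bC b x y := by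
  apply Complex.ext <;> simp [bC, csmul] <;> ring

theorem bC_mk_right (x : V × V) (y z : V) :
    bC b x (y, z) = bC b x (y, 0) + I * bC b x (z, 0) := by
  apply Complex.ext <;> simp [bC] <;> ring

theorem bC_mk_neg_right (x : V × V) (y z : V) :
    bC b x (y, -z) = bC b x (y, 0) - I * bC b x (z, 0) := by
  apply Complex.ext <;> simp [bC]
  ring

theorem conjW_smulW (lam : ℂ) (w : ℂ × (V × V) × ℂ) :
    conjW (smulW lam w) = smulW (starRingEnd ℂ lam) (conjW w) := by
  ext <;> simp [conjW, smulW, conjV, csmul]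
  abel

theorem mukaiC_smulW_smulW (lam mu : ℂ) (w w' : ℂ × (V × V) × ℂ) :
    mukaiC b (smulW lam w) (smulW mu w') = lam * mu * mukaiC b w w' := by
  simp only [mukaiC, smulW, bC_csmul_left, bC_csmul_right]
  ring

theorem mukaiC_expB_conjW_expB (hsymm : ∀ x y : V, b x y = b y x) (B ω : V) :
    mukaiC b (expB b B ω) (conjW (expB b B ω)) = 2 * b ω ω := by
  apply Complex.ext <;> simp [mukaiC, expB, conjW, conjV, bC, hsymm ω B]
  ring

end Mukai

theorem hyperKahler_structure_for_typeB_general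
    {V : Type*} [AddCommGroup V] [Module ℝ V]
    (b : V →ₗ[ℝ] V →ₗ[ℝ] ℝ) (hsymm : ∀ x y : V, b x y = b y x)
    (σ : V × V)
    (lam : ℂ) (hlam : lam ≠ 0) (B ω : V) :
    (PointwiseOrth b ((0 : ℂ), σ, (0 : ℂ)) (smulW lam (expB b B ω)) ∧
      mukaiC b ((0 : ℂ), σ, (0 : ℂ)) (conjW ((0 : ℂ), σ, (0 : ℂ)))
        = mukaiC b (smulW lam (expB b B ω)) (conjW (smulW lam (expB b B ω)))) ↔
    (bC b σ (B, (0 : V)) = 0 ∧ bC b σ (ω, (0 : V)) = 0 ∧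
      ((2 * ‖lam‖ ^ 2 * b ω ω : ℝ) : ℂ) = bC b σ (conjV σ)) := by
  have hlam' : starRingEnd ℂ lam ≠ 0 := (map_ne_zero _).mpr hlam
  have hnorm : lam * starRingEnd ℂ lam * (2 * b ω ω) = ((2 * ‖lam‖ ^ 2 * b ω ω : ℝ) : ℂ) := by
    rw [Complex.mul_conj, ← Complex.sq_norm]
    push_cast
    ring
  rw [pointwiseOrth_iff_mukaiC, conjW_smulW, mukaiC_smulW_smulW, mukaiC_expB_conjW_expB b hsymm,
    hnorm]
  simp only [mukaiC_middle_left, smulW, expB, conjW, conjV, bC_csmul_right, mul_eq_zero, hlam,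
    hlam', false_or]
  rw [bC_mk_right, bC_mk_neg_right, Complex.add_I_mul_eq_zero_and_sub_I_mul_eq_zero_iff]
  exact and_assoc.trans (and_congr_right' (and_congr_right' eq_comm))

theorem hyperKahler_structure_for_typeB
    {V : Type*} [AddCommGroup V] [Module ℝ V]
    (b : V →ₗ[ℝ] V →ₗ[ℝ] ℝ) (hsymm : ∀ x y : V, b x y = b y x)
    (σ : V × V) (hσ0 : bC b σ σ = 0) (hσpos : 0 < (bC b σ (conjV σ)).re)
    (lam : ℂ) (hlam : lam ≠ 0) (B ω : V) (hω : 0 < b ω ω) :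
    (PointwiseOrth b ((0 : ℂ), σ, (0 : ℂ)) (smulW lam (expB b B ω)) ∧
      mukaiC b ((0 : ℂ), σ, (0 : ℂ)) (conjW ((0 : ℂ), σ, (0 : ℂ)))
        = mukaiC b (smulW lam (expB b B ω)) (conjW (smulW lam (expB b B ω)))) ↔
    (bC b σ (B, (0 : V)) = 0 ∧ bC b σ (ω, (0 : V)) = 0 ∧
      ((2 * ‖lam‖ ^ 2 * b ω ω : ℝ) : ℂ) = bC b σ (conjV σ)) :=
  hyperKahler_structure_for_typeB_general b hsymm σ lam hlam B ω
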